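/- Disjointness of vertices across a context split: if Ω_g ⇝ Ω₁ ⋈ Ω₂ for generator-only contexts (with at most one binding per generator in Ω_g), then there is no vertex path p with Ω₁; ∅ ⊢ p : 𝒱 and Ω₂; ∅ ⊢ p : 𝒱. -/
import Mathlib


/-- Availability annotations -/
inductive Avail : Type
  | avail : Avail
  | unavail : Avail
deriving DecidableEq

/-- Vertex structure (VS) types: single vertex, annotated products,
    type variables, corecursive types. -/
inductive VSTy : Type
  | vert : VSTy
  | prod : VSTy → Avail → VSTy → Avail → VSTy
  | tvar : ℕ → VSTy
  | corec : ℕ → VSTy → VSTy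
deriving DecidableEq

/-- Substitution of a VS type for a type variable (capture-avoiding
    in the sense of not descending under a binder that rebinds `t`). -/
def VSTy.subst (t : ℕ) (σ : VSTy) : VSTy → VSTy
  | .vert => .vert
  | .prod τ₁ a₁ τ₂ a₂ => .prod (VSTy.subst t σ τ₁) a₁ (VSTy.subst t σ τ₂) a₂
  | .tvar s => if s = t then σ else .tvar s
  | .corec s τ => if s = t then .corec s τ else .corec s (VSTy.subst t σ τ)

/-- VS subtyping. -/
inductive SubTy : VSTy → VSTy → Prop
  | refl (τ : VSTy) : SubTy τ τ
  | trans {τ τ'' τ' : VSTy} : SubTy τ τ'' → SubTy τ'' τ' → SubTy τ τ'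
  | prodLeft (τ₁ : VSTy) (a₁ : Avail) (τ₂ : VSTy) (a₂ : Avail) (τ₃ : VSTy) :
      SubTy (.prod τ₁ a₁ τ₂ a₂) (.prod τ₃ .unavail τ₂ a₂)
  | prodRight (τ₁ : VSTy) (a₁ : Avail) (τ₂ : VSTy) (a₂ : Avail) (τ₃ : VSTy) :
      SubTy (.prod τ₁ a₁ τ₂ a₂) (.prod τ₁ a₁ τ₃ .unavail)
  | prodCong {τ₁ τ₁' τ₂ τ₂' : VSTy} (a₁ a₂ : Avail) :
      SubTy τ₁ τ₁' → SubTy τ₂ τ₂' → SubTy (.prod τ₁ a₁ τ₂ a₂) (.prod τ₁' a₁ τ₂' a₂)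
  | corec1 (t : ℕ) (τ : VSTy) : SubTy (.corec t τ) (VSTy.subst t (.corec t τ) τ)
  | corec2 (t : ℕ) (τ : VSTy) : SubTy (VSTy.subst t (.corec t τ) τ) (.corec t τ)

/-- VS type splitting  τ ⇝ τ₁ ⋈ τ₂. -/
inductive VSplit : VSTy → VSTy → VSTy → Prop
  | prod (τ₁ τ₂ : VSTy) :
      VSplit (.prod τ₁ .avail τ₂ .avail)
            (.prod τ₁ .avail τ₂ .unavail)
            (.prod τ₁ .unavail τ₂ .avail)
  | both {τ₁ τ₁' τ₁'' τ₂ τ₂' τ₂'' : VSTy} :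
      VSplit τ₁ τ₁' τ₁'' → VSplit τ₂ τ₂' τ₂'' →
      VSplit (.prod τ₁ .avail τ₂ .avail)
            (.prod τ₁' .avail τ₂' .avail)
            (.prod τ₁'' .avail τ₂'' .avail)
  | left {τ₁ τ₁' τ₁'' : VSTy} (τ₂ : VSTy) (a : Avail) :
      VSplit τ₁ τ₁' τ₁'' →
      VSplit (.prod τ₁ .avail τ₂ a)
            (.prod τ₁' .avail τ₂ a)
            (.prod τ₁'' .avail τ₂ .unavail)
  | right {τ₂ τ₂' τ₂'' : VSTy} (τ₁ : VSTy) (a : Avail) :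
      VSplit τ₂ τ₂' τ₂'' →
      VSplit (.prod τ₁ a τ₂ .avail)
            (.prod τ₁ a τ₂' .avail)
            (.prod τ₁ .unavail τ₂'' .avail)
  | corec {t : ℕ} {τ τ₁ τ₂ : VSTy} :
      VSplit (VSTy.subst t (.corec t τ) τ) τ₁ τ₂ → VSplit (.corec t τ) τ₁ τ₂
  | sub {τ τ₁ τ₁' τ₂ : VSTy} :
      VSplit τ τ₁' τ₂ → SubTy τ₁' τ₁ → VSplit τ τ₁ τ₂
  | comm {τ τ₁ τ₂ : VSTy} : VSplit τ τ₂ τ₁ → VSplit τ τ₁ τ₂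

/-- Names bound in contexts: VS variables or generators. -/
inductive VName : Type
  | var : ℕ → VName
  | gen : ℕ → VName
deriving DecidableEq

/-- A context binds names to VS types. -/
abbrev Ctx := List (VName × VSTy)

/-- Affine context splitting  Ω ⇝ Ω₁ ⋈ Ω₂. -/
inductive CtxSplit : Ctx → Ctx → Ctx → Prop
  | empty : CtxSplit [] [] []
  | comm {Ω Ω₁ Ω₂ : Ctx} : CtxSplit Ω Ω₂ Ω₁ → CtxSplit Ω Ω₁ Ω₂
  | bind {Ω Ω₁ Ω₂ : Ctx} (x : VName) (τ : VSTy) :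
      CtxSplit Ω Ω₁ Ω₂ → CtxSplit ((x, τ) :: Ω) ((x, τ) :: Ω₁) Ω₂
  | typeSplit {Ω Ω₁ Ω₂ : Ctx} {τ τ₁ τ₂ : VSTy} (x : VName) :
      CtxSplit Ω Ω₁ Ω₂ → VSplit τ τ₁ τ₂ →
      CtxSplit ((x, τ) :: Ω) ((x, τ₁) :: Ω₁) ((x, τ₂) :: Ω₂)

/-- Vertex structures. -/
inductive VS : Type
  | var : ℕ → VS
  | gen : ℕ → VS
  | pair : VS → VS → VS
  | fst : VS → VS
  | snd : VS → VS
deriving DecidableEq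

/-- Typing of vertex structures:  Ω; Ψ ⊢ V : τ, with affine context Ω
    and unrestricted context Ψ. -/
inductive HasTy : Ctx → Ctx → VS → VSTy → Prop
  | omegaVar {Ω Ψ : Ctx} {u : ℕ} {τ : VSTy} :
      (VName.var u, τ) ∈ Ω → HasTy Ω Ψ (.var u) τ
  | psiVar {Ω Ψ : Ctx} {u : ℕ} {τ : VSTy} :
      (VName.var u, τ) ∈ Ψ → HasTy Ω Ψ (.var u) τ
  | omegaGen {Ω Ψ : Ctx} {g : ℕ} {τ : VSTy} :
      (VName.gen g, τ) ∈ Ω → HasTy Ω Ψ (.gen g) τ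
  | psiGen {Ω Ψ : Ctx} {g : ℕ} {τ : VSTy} :
      (VName.gen g, τ) ∈ Ψ → HasTy Ω Ψ (.gen g) τ
  | pair {Ω Ω₁ Ω₂ Ψ : Ctx} {V₁ V₂ : VS} {τ₁ τ₂ : VSTy} :
      CtxSplit Ω Ω₁ Ω₂ → HasTy Ω₁ Ψ V₁ τ₁ → HasTy Ω₂ Ψ V₂ τ₂ →
      HasTy Ω Ψ (.pair V₁ V₂) (.prod τ₁ .avail τ₂ .avail)
  | onlyLeftPair {Ω Ψ Ψ' : Ctx} {V₁ V₂ : VS} {τ₁ τ₂ : VSTy} :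
      HasTy Ω Ψ V₁ τ₁ → HasTy [] Ψ' V₂ τ₂ →
      HasTy Ω Ψ (.pair V₁ V₂) (.prod τ₁ .avail τ₂ .unavail)
  | onlyRightPair {Ω Ψ Ψ' : Ctx} {V₁ V₂ : VS} {τ₁ τ₂ : VSTy} :
      HasTy [] Ψ' V₁ τ₁ → HasTy Ω Ψ V₂ τ₂ →
      HasTy Ω Ψ (.pair V₁ V₂) (.prod τ₁ .unavail τ₂ .avail)
  | fst {Ω Ψ : Ctx} {V : VS} {τ₁ τ₂ : VSTy} {a : Avail} :
      HasTy Ω Ψ V (.prod τ₁ .avail τ₂ a) → HasTy Ω Ψ (.fst V) τ₁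
  | snd {Ω Ψ : Ctx} {V : VS} {τ₁ τ₂ : VSTy} {a : Avail} :
      HasTy Ω Ψ V (.prod τ₁ a τ₂ .avail) → HasTy Ω Ψ (.snd V) τ₂
  | sub {Ω Ψ : Ctx} {V : VS} {τ' τ : VSTy} :
      HasTy Ω Ψ V τ' → SubTy τ' τ → HasTy Ω Ψ V τ

/-- Big-step normalization of vertex structures  V ↓ V'. -/
inductive VNorm : VS → VS → Prop
  | var (u : ℕ) : VNorm (.var u) (.var u)
  | gen (g : ℕ) : VNorm (.gen g) (.gen g)
  | pair {V₁ V₁' V₂ V₂' : VS} :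
      VNorm V₁ V₁' → VNorm V₂ V₂' → VNorm (.pair V₁ V₂) (.pair V₁' V₂')
  | fstPair {V V₁ V₂ : VS} : VNorm V (.pair V₁ V₂) → VNorm (.fst V) V₁
  | fstNotPair {V V' : VS} :
      VNorm V V' → (∀ V₁ V₂, V' ≠ .pair V₁ V₂) → VNorm (.fst V) (.fst V')
  | sndPair {V V₁ V₂ : VS} : VNorm V (.pair V₁ V₂) → VNorm (.snd V) V₂
  | sndNotPair {V V' : VS} :
      VNorm V V' → (∀ V₁ V₂, V' ≠ .pair V₁ V₂) → VNorm (.snd V) (.snd V')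

/-- Vertex structure equivalence  Ψ ⊢ V ≡ V' : τ. -/
inductive VSEquiv : Ctx → VS → VS → VSTy → Prop
  | refl {Ψ : Ctx} {V : VS} {τ : VSTy} :
      HasTy [] Ψ V τ → VSEquiv Ψ V V τ
  | comm {Ψ : Ctx} {V V' : VS} {τ : VSTy} :
      VSEquiv Ψ V' V τ → VSEquiv Ψ V V' τ
  | trans {Ψ : Ctx} {V V'' V' : VS} {τ : VSTy} :
      VSEquiv Ψ V V'' τ → VSEquiv Ψ V'' V' τ → VSEquiv Ψ V V' τ
  | pair {Ψ : Ctx} {V₁ V₁' V₂ V₂' : VS} {τ₁ τ₂ : VSTy} :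
      VSEquiv Ψ V₁ V₁' τ₁ → VSEquiv Ψ V₂ V₂' τ₂ →
      VSEquiv Ψ (.pair V₁ V₂) (.pair V₁' V₂') (.prod τ₁ .avail τ₂ .avail)
  | onlyLeftPair {Ψ Ψ' : Ctx} {V₁ V₁' V₂ V₂' : VS} {τ₁ τ₂ : VSTy} :
      VSEquiv Ψ V₁ V₁' τ₁ → VSEquiv Ψ' V₂ V₂' τ₂ →
      VSEquiv Ψ (.pair V₁ V₂) (.pair V₁' V₂') (.prod τ₁ .avail τ₂ .unavail)
  | onlyRightPair {Ψ Ψ' : Ctx} {V₁ V₁' V₂ V₂' : VS} {τ₁ τ₂ : VSTy} :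
      VSEquiv Ψ' V₁ V₁' τ₁ → VSEquiv Ψ V₂ V₂' τ₂ →
      VSEquiv Ψ (.pair V₁ V₂) (.pair V₁' V₂') (.prod τ₁ .unavail τ₂ .avail)
  | fst {Ψ : Ctx} {V V' : VS} {τ₁ τ₂ : VSTy} {a : Avail} :
      VSEquiv Ψ V V' (.prod τ₁ .avail τ₂ a) → VSEquiv Ψ (.fst V) (.fst V') τ₁
  | snd {Ψ : Ctx} {V V' : VS} {τ₁ τ₂ : VSTy} {a : Avail} :
      VSEquiv Ψ V V' (.prod τ₁ a τ₂ .avail) → VSEquiv Ψ (.snd V) (.snd V') τ₂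
  | fstPair {Ψ : Ctx} {V V₁ V₂ : VS} {τ₁ τ₂ : VSTy} {a : Avail} :
      VSEquiv Ψ V (.pair V₁ V₂) (.prod τ₁ .avail τ₂ a) →
      VSEquiv Ψ (.fst V) V₁ τ₁
  | sndPair {Ψ : Ctx} {V V₁ V₂ : VS} {τ₁ τ₂ : VSTy} {a : Avail} :
      VSEquiv Ψ V (.pair V₁ V₂) (.prod τ₁ a τ₂ .avail) →
      VSEquiv Ψ (.snd V) V₂ τ₂
  | sub {Ψ : Ctx} {V V' : VS} {τ' τ : VSTy} :
      VSEquiv Ψ V V' τ' → SubTy τ' τ → VSEquiv Ψ V V' τ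

/-- VNeutral vertex structures: variables, generators, and their projections. -/
inductive VNeutral : VS → Prop
  | var (u : ℕ) : VNeutral (.var u)
  | gen (g : ℕ) : VNeutral (.gen g)
  | fst {V : VS} : VNeutral V → VNeutral (.fst V)
  | snd {V : VS} : VNeutral V → VNeutral (.snd V)

/-- VNormal vertex structures: neutral structures and pairs of normal structures. -/
inductive VNormal : VS → Prop
  | neutral {V : VS} : VNeutral V → VNormal V
  | pair {V₁ V₂ : VS} : VNormal V₁ → VNormal V₂ → VNormal (.pair V₁ V₂)

/-- Vertex paths: a generator followed by a sequence of projections. -/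
inductive IsPath : VS → Prop
  | gen (g : ℕ) : IsPath (.gen g)
  | fst {p : VS} : IsPath p → IsPath (.fst p)
  | snd {p : VS} : IsPath p → IsPath (.snd p)

/-- A context containing only generator bindings. -/
def GenOnly (Ω : Ctx) : Prop := ∀ e ∈ Ω, ∃ g τ, e = (VName.gen g, τ)

/-- Substitution of a vertex structure for a VS variable. -/
def VS.subst (u : ℕ) (W : VS) : VS → VS
  | .var v => if v = u then W else .var v
  | .gen g => .gen g
  | .pair V₁ V₂ => .pair (VS.subst u W V₁) (VS.subst u W V₂)
  | .fst V => .fst (VS.subst u W V)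
  | .snd V => .snd (VS.subst u W V)


/-- Available projection paths of a VS type (application order). -/
inductive Pav : VSTy → List Bool → Prop
  | vert : Pav .vert []
  | fst {τ₁ τ₂ : VSTy} {a : Avail} {π : List Bool} :
      Pav τ₁ π → Pav (.prod τ₁ .avail τ₂ a) (false :: π)
  | snd {τ₁ τ₂ : VSTy} {a : Avail} {π : List Bool} :
      Pav τ₂ π → Pav (.prod τ₁ a τ₂ .avail) (true :: π)
  | corec {t : ℕ} {τ : VSTy} {π : List Bool} :
      Pav (VSTy.subst t (.corec t τ) τ) π → Pav (.corec t τ) π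

lemma pav_sub {σ σ' : VSTy} (h : SubTy σ σ') : ∀ π, Pav σ' π → Pav σ π := by
  induction h with
  | refl τ => exact fun π hp => hp
  | trans _ _ ih1 ih2 => exact fun π hp => ih1 π (ih2 π hp)
  | prodLeft τ₁ a₁ τ₂ a₂ τ₃ =>
      intro π hp
      cases hp with
      | snd h => exact Pav.snd h
  | prodRight τ₁ a₁ τ₂ a₂ τ₃ =>
      intro π hp
      cases hp with
      | fst h => exact Pav.fst h
  | prodCong a₁ a₂ _ _ ih1 ih2 =>
      intro π hp
      cases hp with
      | fst h => exact Pav.fst (ih1 _ h)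
      | snd h => exact Pav.snd (ih2 _ h)
  | corec1 t τ => exact fun π hp => Pav.corec hp
  | corec2 t τ =>
      intro π hp
      cases hp with
      | corec h => exact h

/-- root generator of a path -/
def rootOf : VS → ℕ
  | .gen g => g
  | .fst V => rootOf V
  | .snd V => rootOf V
  | _ => 0

/-- projection list of a path, in application order -/
def projsOf : VS → List Bool
  | .fst V => projsOf V ++ [false]
  | .snd V => projsOf V ++ [true]
  | _ => []

lemma hasTy_path {Ω Ψ : Ctx} {p : VS} {τ : VSTy} (h : HasTy Ω Ψ p τ) :
    IsPath p → Ψ = [] → ∀ π, Pav τ π →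
    ∃ σ, (VName.gen (rootOf p), σ) ∈ Ω ∧ Pav σ (projsOf p ++ π) := by
  induction h with
  | omegaVar hm => intro hp; cases hp
  | psiVar hm => intro hp; cases hp
  | omegaGen hm => intro _ _ π hpav; exact ⟨_, hm, hpav⟩
  | psiGen hm => intro _ hΨ; subst hΨ; simp at hm
  | pair _ _ _ => intro hp; cases hp
  | onlyLeftPair _ _ => intro hp; cases hp
  | onlyRightPair _ _ => intro hp; cases hp
  | fst _ ih =>
      intro hp hΨ π hpav
      cases hp with
      | fst hp' =>
        obtain ⟨σ, hm, hpav'⟩ := ih hp' hΨ (false :: π) (Pav.fst hpav)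
        refine ⟨σ, hm, ?_⟩
        simpa [projsOf, List.append_assoc] using hpav'
  | snd _ ih =>
      intro hp hΨ π hpav
      cases hp with
      | snd hp' =>
        obtain ⟨σ, hm, hpav'⟩ := ih hp' hΨ (true :: π) (Pav.snd hpav)
        refine ⟨σ, hm, ?_⟩
        simpa [projsOf, List.append_assoc] using hpav'
  | sub _ hsub ih =>
      intro hp hΨ π hpav
      exact ih hp hΨ π (pav_sub hsub π hpav)

lemma split_names {Ω Ω₁ Ω₂ : Ctx} (h : CtxSplit Ω Ω₁ Ω₂) :
    ∀ x, x ∈ Ω₁.map Prod.fst ∨ x ∈ Ω₂.map Prod.fst → x ∈ Ω.map Prod.fst := by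
  induction h with
  | empty => simp
  | comm _ ih => exact fun x hx => ih x hx.symm
  | bind y τ _ ih =>
      intro x hx
      simp only [List.map_cons, List.mem_cons] at hx ⊢
      rcases hx with (h1 | h1) | h1
      · exact Or.inl h1
      · exact Or.inr (ih x (Or.inl h1))
      · exact Or.inr (ih x (Or.inr h1))
  | typeSplit y _ _ ih =>
      intro x hx
      simp only [List.map_cons, List.mem_cons] at hx ⊢
      rcases hx with (h1 | h1) | (h1 | h1)
      · exact Or.inl h1
      · exact Or.inr (ih x (Or.inl h1))
      · exact Or.inl h1
      · exact Or.inr (ih x (Or.inr h1))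

lemma split_lookup {Ω Ω₁ Ω₂ : Ctx} (h : CtxSplit Ω Ω₁ Ω₂) :
    (Ω.map Prod.fst).Nodup → ∀ {x : VName} {σ₁ σ₂ : VSTy},
      (x, σ₁) ∈ Ω₁ → (x, σ₂) ∈ Ω₂ → ∃ σ, VSplit σ σ₁ σ₂ := by
  induction h with
  | empty => intro _ x σ₁ σ₂ h1; simp at h1
  | comm _ ih =>
      intro hnd x σ₁ σ₂ h1 h2
      obtain ⟨σ, hs⟩ := ih hnd h2 h1
      exact ⟨σ, hs.comm⟩
  | bind y τ hsp ih =>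
      intro hnd x σ₁ σ₂ h1 h2
      simp only [List.map_cons, List.nodup_cons] at hnd
      rcases List.mem_cons.1 h1 with he | ht
      · rw [Prod.mk.injEq] at he
        obtain ⟨rfl, rfl⟩ := he
        exact absurd (split_names hsp x (Or.inr (List.mem_map.2 ⟨(x, σ₂), h2, rfl⟩))) hnd.1
      · exact ih hnd.2 ht h2
  | typeSplit y hsp hv ih =>
      intro hnd x σ₁ σ₂ h1 h2
      simp only [List.map_cons, List.nodup_cons] at hnd
      rcases List.mem_cons.1 h1 with he1 | ht1
      · rw [Prod.mk.injEq] at he1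
        obtain ⟨rfl, rfl⟩ := he1
        rcases List.mem_cons.1 h2 with he2 | ht2
        · rw [Prod.mk.injEq] at he2
          obtain ⟨-, rfl⟩ := he2
          exact ⟨_, hv⟩
        · exact absurd (split_names hsp x (Or.inr (List.mem_map.2 ⟨(x, σ₂), ht2, rfl⟩))) hnd.1
      · rcases List.mem_cons.1 h2 with he2 | ht2
        · rw [Prod.mk.injEq] at he2
          obtain ⟨rfl, rfl⟩ := he2
          exact absurd (split_names hsp x (Or.inl (List.mem_map.2 ⟨(x, σ₁), ht1, rfl⟩))) hnd.1
        · exact ih hnd.2 ht1 ht2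

lemma vsplit_disjoint {σ σ₁ σ₂ : VSTy} (h : VSplit σ σ₁ σ₂) :
    ∀ π, Pav σ₁ π → Pav σ₂ π → False := by
  induction h with
  | prod τ₁ τ₂ =>
      intro π h1 h2
      cases h1 with
      | fst h1' => cases h2
  | both _ _ ih1 ih2 =>
      intro π h1 h2
      cases h1 with
      | fst h1' => cases h2 with | fst h2' => exact ih1 _ h1' h2'
      | snd h1' => cases h2 with | snd h2' => exact ih2 _ h1' h2'
  | left τ₂ a _ ih =>
      intro π h1 h2
      cases h1 with
      | fst h1' => cases h2 with | fst h2' => exact ih _ h1' h2'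
      | snd h1' => cases h2
  | right τ₁ a _ ih =>
      intro π h1 h2
      cases h1 with
      | snd h1' => cases h2 with | snd h2' => exact ih _ h1' h2'
      | fst h1' => cases h2
  | corec _ ih => exact ih
  | sub _ hsub ih =>
      intro π h1 h2
      exact ih π (pav_sub hsub π h1) h2
  | comm _ ih => exact fun π h1 h2 => ih π h2 h1

/-- disjointness of vertices across a context split of a
    generator-only context with at most one binding per generator. -/
theorem ctxSplit_no_shared_path {Ω Ω₁ Ω₂ : Ctx}
    (hgen : GenOnly Ω) (hnodup : (Ω.map Prod.fst).Nodup)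
    (h : CtxSplit Ω Ω₁ Ω₂) :
    ¬ ∃ p : VS, IsPath p ∧ HasTy Ω₁ [] p .vert ∧ HasTy Ω₂ [] p .vert := by
  rintro ⟨p, hp, h1, h2⟩
  obtain ⟨σ₁, hm1, hpav1⟩ := hasTy_path h1 hp rfl [] Pav.vert
  obtain ⟨σ₂, hm2, hpav2⟩ := hasTy_path h2 hp rfl [] Pav.vert
  obtain ⟨σ, hs⟩ := split_lookup h hnodup hm1 hm2
  exact vsplit_disjoint hs _ hpav1 hpav2
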